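/- Let s_f, s_x > 0, set α = (s_f + 2s_x)/s_f, and define μ_c(x) = α^{n/4}·exp(−‖x‖²/(2s_f)) for x ∈ ℝⁿ. Let x ~ N(0, s_x·I_n). Given ε > 0, assume n₁ > (1/ε)·α^{n/2}. Then there exist weight vectors w₁,…,w_{n₁} ∈ ℝⁿ such that the single-hidden-layer network f(x) = Σ_{i=1}^{n₁} a_i·cos(⟨w_i, x⟩/√s_f) with a_i = α^{n/4}/n₁ for all i satisfies E_x[(f(x) − μ_c(x))²] ≤ ε. -/

import Mathlib

/-!
Draw the weights `wᵢ` independently from the standard Gaussian on `ℝⁿ`. The characteristic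
function of the Gaussian gives `E_w cos(⟨w, x⟩/√s_f) = exp(−‖x‖²/(2s_f))`, so for every `x` the
network is an empirical mean of `n₁` i.i.d. copies of a feature bounded by `c = α^{n/4}` whose
expectation is `μ_c(x)`; its mean squared deviation is a variance, at most `c²/n₁`. Integrating
over `x` and exchanging the integrals, the expected error over the weights is at most
`c²/n₁ = α^{n/2}/n₁ < ε`, hence some choice of weights does at least as well.
-/

open MeasureTheory

/-- The distribution `N(0, s·Iₙ)` on `ℝⁿ`, given as a density with respect to Lebesgue
measure. -/
noncomputable def gaussMeasure (n : ℕ) (s : ℝ) : Measure (Fin n → ℝ) :=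
  MeasureTheory.volume.withDensity fun x =>
    ENNReal.ofReal ((2 * Real.pi * s) ^ (-(n : ℝ) / 2) *
      Real.exp (-(∑ i, (x i) ^ 2) / (2 * s)))

open ProbabilityTheory
open scoped NNReal

section Sampling

lemma abs_empirical_mean_le {m : ℕ} (hm : m ≠ 0) {a : Fin m → ℝ} {C : ℝ}
    (ha : ∀ i, |a i| ≤ C) : |(m : ℝ)⁻¹ * ∑ i, a i| ≤ C := by
  rw [abs_mul, abs_inv, Nat.abs_cast, inv_mul_le_iff₀ (by positivity)]
  calc |∑ i, a i| ≤ ∑ _i : Fin m, C :=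
        (Finset.abs_sum_le_sum_abs _ _).trans (Finset.sum_le_sum fun i _ => ha i)
    _ = m * C := by simp

variable {Ω X : Type*} [MeasurableSpace Ω] [MeasurableSpace X]
  {ν : Measure Ω} [IsProbabilityMeasure ν]

lemma integral_empirical_mean {f : Ω → ℝ} (hf : Integrable f ν) {m : ℕ} (hm : m ≠ 0) :
    ∫ ω, (m : ℝ)⁻¹ * ∑ i : Fin m, f (ω i) ∂(Measure.pi fun _ => ν) = ∫ v, f v ∂ν := by
  rw [integral_const_mul, integral_finsetSum _ fun i _ => integrable_comp_eval hf]
  simp_rw [integral_comp_eval (μ := fun _ : Fin m => ν) hf.aestronglyMeasurable,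
    Finset.sum_const, Finset.card_univ, Fintype.card_fin, nsmul_eq_mul]
  field_simp

lemma variance_empirical_mean_le {f : Ω → ℝ} (hf : Measurable f) {C : ℝ} (hC : ∀ v, |f v| ≤ C)
    {m : ℕ} (hm : m ≠ 0) :
    Var[fun ω => (m : ℝ)⁻¹ * ∑ i : Fin m, f (ω i); Measure.pi fun _ => ν] ≤ C ^ 2 / m := by
  have hVar : Var[f; ν] ≤ C ^ 2 := by
    have := variance_le_sq_of_bounded (μ := ν) (a := -C) (b := C)
      (ae_of_all _ fun v => abs_le.mp (hC v)) hf.aemeasurable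
    convert this using 1; ring
  have hsum : Var[∑ i : Fin m, fun ω : Fin m → Ω => f (ω i); Measure.pi fun _ => ν]
      = m * Var[f; ν] := by
    rw [variance_sum_pi (X := fun _ => f) fun _ => memLp_of_bounded
      (ae_of_all _ fun v => abs_le.mp (hC v)) hf.aestronglyMeasurable 2]
    simp
  rw [variance_const_mul, show (fun ω : Fin m → Ω => ∑ i : Fin m, f (ω i))
    = ∑ i : Fin m, fun ω : Fin m → Ω => f (ω i) by ext; simp, hsum]
  have hm_pos : (0 : ℝ) < m := by positivity
  calc ((m : ℝ)⁻¹) ^ 2 * (m * Var[f; ν]) = Var[f; ν] / m := by field_simp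
    _ ≤ C ^ 2 / m := by gcongr

lemma integral_sq_empirical_mean_sub_le {f : Ω → ℝ} (hf : Measurable f) {C : ℝ}
    (hC : ∀ v, |f v| ≤ C) {m : ℕ} (hm : m ≠ 0) :
    ∫ ω, ((m : ℝ)⁻¹ * ∑ i : Fin m, f (ω i) - ∫ v, f v ∂ν) ^ 2 ∂(Measure.pi fun _ => ν)
      ≤ C ^ 2 / m := by
  have hint : Integrable f ν :=
    .of_bound hf.aestronglyMeasurable C (ae_of_all _ hC)
  have hmeas : AEMeasurable (fun ω : Fin m → Ω => (m : ℝ)⁻¹ * ∑ i, f (ω i))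
      (Measure.pi fun _ => ν) :=
    ((Finset.measurable_sum _ fun i _ => hf.comp (measurable_pi_apply i)).const_mul
      _).aemeasurable
  rw [← integral_empirical_mean hint hm, ← variance_eq_integral hmeas]
  exact variance_empirical_mean_le hf hC hm

variable (ν) in
theorem exists_integral_sq_empirical_mean_sub_le (μ : Measure X) [IsProbabilityMeasure μ]
    {φ : Ω → X → ℝ} (hφ : Measurable (Function.uncurry φ)) {C : ℝ} (hC : ∀ v x, |φ v x| ≤ C)
    {m : ℕ} (hm : m ≠ 0) :
    ∃ ω : Fin m → Ω,
      ∫ x, ((m : ℝ)⁻¹ * ∑ i, φ (ω i) x - ∫ v, φ v x ∂ν) ^ 2 ∂μ ≤ C ^ 2 / m := by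
  set err : (Fin m → Ω) → X → ℝ :=
    fun ω x => ((m : ℝ)⁻¹ * ∑ i, φ (ω i) x - ∫ v, φ v x ∂ν) ^ 2
  have hmeas : Measurable (Function.uncurry err) := by
    have hmean : Measurable fun x => ∫ v, φ v x ∂ν :=
      (hφ.stronglyMeasurable.integral_prod_left (μ := ν)).measurable
    have hcomp : ∀ i : Fin m, Measurable fun p : (Fin m → Ω) × X => φ (p.1 i) p.2 :=
      fun i => hφ.comp (((measurable_pi_apply i).comp measurable_fst).prodMk measurable_snd :
        Measurable fun p : (Fin m → Ω) × X => (p.1 i, p.2))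
    exact ((Finset.measurable_sum _ fun i _ => hcomp i).const_mul _ |>.sub
      (hmean.comp measurable_snd)).pow_const 2
  have hbound : ∀ ω x, ‖err ω x‖ ≤ (2 * C) ^ 2 := by
    intro ω x
    have hmean := abs_empirical_mean_le hm fun i => hC (ω i) x
    have htarget : |∫ v, φ v x ∂ν| ≤ C := by
      simpa using norm_integral_le_of_norm_le_const (μ := ν)
        (ae_of_all _ fun v => (Real.norm_eq_abs _).trans_le (hC v x))
    rw [Real.norm_eq_abs, abs_pow]
    gcongr
    linarith [abs_sub _ _ |>.trans (add_le_add hmean htarget)]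
  have hint : Integrable (Function.uncurry err) ((Measure.pi fun _ => ν).prod μ) :=
    .of_bound hmeas.aestronglyMeasurable _ (ae_of_all _ fun p => hbound p.1 p.2)
  obtain ⟨ω, hω⟩ := exists_le_integral hint.integral_prod_left
  refine ⟨ω, hω.trans ?_⟩
  simp only [Function.uncurry_apply_pair]
  rw [integral_integral_swap hint]
  calc ∫ x, ∫ ω, err ω x ∂(Measure.pi fun _ => ν) ∂μ ≤ ∫ _x, C ^ 2 / m ∂μ :=
        integral_mono_of_nonneg (ae_of_all _ fun x => integral_nonneg fun ω => sq_nonneg _)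
          (integrable_const _) (ae_of_all _ fun x =>
            integral_sq_empirical_mean_sub_le (hφ.comp measurable_prodMk_right)
              (fun v => hC v x) hm)
    _ = C ^ 2 / m := by simp

end Sampling

lemma integral_cos_sum_mul_gaussianReal_pi {ι : Type*} [Fintype ι] (v : ℝ≥0) (t : ι → ℝ) :
    ∫ w, Real.cos (∑ j, w j * t j) ∂(Measure.pi fun _ : ι => gaussianReal 0 v)
      = Real.exp (-(v * ∑ j, t j ^ 2) / 2) := by
  have hchar : ∫ w, Complex.exp (↑(∑ j, w j * t j) * Complex.I)
      ∂(Measure.pi fun _ : ι => gaussianReal 0 v)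
      = ∏ j, charFun (gaussianReal 0 v) (t j) := by
    simp_rw [charFun_apply_real, ← integral_fintype_prod_eq_prod, ← Complex.exp_sum]
    push_cast
    simp_rw [Finset.sum_mul, mul_comm]
  have hint : Integrable (fun w : ι → ℝ => Complex.exp (↑(∑ j, w j * t j) * Complex.I))
      (Measure.pi fun _ : ι => gaussianReal 0 v) :=
    .of_bound (by fun_prop : Continuous _).aestronglyMeasurable 1
      (ae_of_all _ fun w => (Complex.norm_exp_ofReal_mul_I _).le)
  simp_rw [← Complex.exp_ofReal_mul_I_re]
  have hre := integral_re hint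
  simp only [RCLike.re_to_complex] at hre
  rw [hre, hchar]
  simp_rw [charFun_gaussianReal, ← Complex.exp_sum]
  rw [← Complex.exp_ofReal_re]
  congr 2
  push_cast
  simp [Finset.mul_sum, Finset.sum_div, neg_div]

lemma integral_cos_div_sqrt_gaussianReal_pi {ι : Type*} [Fintype ι] {s : ℝ} (hs : 0 < s)
    (x : ι → ℝ) :
    ∫ w, Real.cos ((∑ j, w j * x j) / √s) ∂(Measure.pi fun _ : ι => gaussianReal 0 1)
      = Real.exp (-(∑ j, x j ^ 2) / (2 * s)) := by
  have h := integral_cos_sum_mul_gaussianReal_pi 1 fun j => x j / √s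
  simp only [← mul_div_assoc, ← Finset.sum_div, div_pow, Real.sq_sqrt hs.le] at h
  rw [h, NNReal.coe_one, one_mul, neg_div, div_div, neg_div, mul_comm s]

lemma gaussMeasure_density_eq_prod (n : ℕ) {s : ℝ} (hs : 0 < s) (x : Fin n → ℝ) :
    (2 * Real.pi * s) ^ (-(n : ℝ) / 2) * Real.exp (-(∑ i, (x i) ^ 2) / (2 * s))
      = ∏ i, gaussianPDFReal 0 s.toNNReal (x i) := by
  simp only [gaussianPDFReal, Real.coe_toNNReal _ hs.le, sub_zero, Finset.prod_mul_distrib,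
    Finset.prod_const, Finset.card_univ, Fintype.card_fin, ← Real.exp_sum, Finset.sum_div,
    neg_div, Finset.sum_neg_distrib]
  congr 1
  rw [Real.sqrt_eq_rpow, ← Real.rpow_neg (by positivity),
    ← Real.rpow_mul_natCast (by positivity)]
  ring_nf

lemma isProbabilityMeasure_gaussMeasure (n : ℕ) {s : ℝ} (hs : 0 < s) :
    IsProbabilityMeasure (gaussMeasure n s) := by
  constructor
  have hint : Integrable fun x : Fin n → ℝ => ∏ i, gaussianPDFReal 0 s.toNNReal (x i) :=
    .fintype_prod fun _ => integrable_gaussianPDFReal 0 _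
  rw [gaussMeasure, withDensity_apply _ MeasurableSet.univ, Measure.restrict_univ]
  simp_rw [gaussMeasure_density_eq_prod n hs]
  rw [← ofReal_integral_eq_lintegral_ofReal hint
    (ae_of_all _ fun x => Finset.prod_nonneg fun i _ => gaussianPDFReal_nonneg _ _ _),
    integral_fintype_prod_volume_eq_prod (f := fun _ => gaussianPDFReal 0 s.toNNReal),
    integral_gaussianPDFReal_eq_one 0 (by simpa using hs)]
  simp

theorem stmt16_general (n n₁ : ℕ)
    (sf sx α ε : ℝ) (hsf : 0 < sf) (hsx : 0 < sx) (hε : 0 < ε)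
    (hα : α = (sf + 2 * sx) / sf)
    (μc : (Fin n → ℝ) → ℝ)
    (hμc : ∀ x, μc x = α ^ ((n : ℝ) / 4) *
      Real.exp (-(∑ i, (x i) ^ 2) / (2 * sf)))
    (hbig : (n₁ : ℝ) > (1 / ε) * α ^ ((n : ℝ) / 2)) :
    ∃ w : Fin n₁ → Fin n → ℝ,
      ∫ x, ((∑ i, (α ^ ((n : ℝ) / 4) / n₁) *
          Real.cos ((∑ j, w i j * x j) / Real.sqrt sf)) - μc x) ^ 2
        ∂(gaussMeasure n sx) ≤ ε := by
  have hα0 : 0 < α := hα ▸ by positivity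
  set c := α ^ ((n : ℝ) / 4)
  have hc2 : c ^ 2 = α ^ ((n : ℝ) / 2) := by
    rw [← Real.rpow_natCast, ← Real.rpow_mul hα0.le]; ring_nf
  have hn₁ : (0 : ℝ) < n₁ := lt_of_le_of_lt (by positivity) hbig
  have := isProbabilityMeasure_gaussMeasure n hsx
  obtain ⟨w, hw⟩ := exists_integral_sq_empirical_mean_sub_le
    (Measure.pi fun _ : Fin n => gaussianReal 0 1) (gaussMeasure n sx)
    (φ := fun w x => c * Real.cos ((∑ j, w j * x j) / √sf))
    (by fun_prop) (fun w x => by simpa [abs_mul, abs_of_pos (show 0 < c by positivity)]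
      using mul_le_of_le_one_right (by positivity) (Real.abs_cos_le_one _))
    (Nat.cast_pos.mp hn₁).ne'
  refine ⟨w, le_of_eq_of_le (integral_congr_ae (ae_of_all _ fun x => ?_)) (hw.trans ?_)⟩
  · simp only [hμc, integral_const_mul, integral_cos_div_sqrt_gaussianReal_pi hsf,
      Finset.mul_sum]
    congr 2
    exact Finset.sum_congr rfl fun i _ => by ring
  · rw [hc2, div_le_iff₀ hn₁]
    rw [gt_iff_lt, one_div_mul_eq_div, div_lt_iff₀' hε] at hbig
    exact hbig.le

/-- Theorem 3 (sufficiency of exponentially many nodes): if `n₁ > (1/ε)·α^{n/2}` with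
`α = (s_f+2s_x)/s_f`, then there exist weight vectors `w₁,…,w_{n₁}` such that the
one-hidden-layer network `f(x) = Σᵢ (α^{n/4}/n₁)·cos(⟨wᵢ,x⟩/√s_f)` satisfies
`E_x[(f(x) − μ_c(x))²] ≤ ε` for `x ~ N(0, s_x·Iₙ)`, where
`μ_c(x) = α^{n/4}·exp(−‖x‖²/(2s_f))`. -/
theorem stmt16 (n n₁ : ℕ) (hn₁ : 0 < n₁)
    (sf sx α ε : ℝ) (hsf : 0 < sf) (hsx : 0 < sx) (hε : 0 < ε)
    (hα : α = (sf + 2 * sx) / sf)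
    (μc : (Fin n → ℝ) → ℝ)
    (hμc : ∀ x, μc x = α ^ ((n : ℝ) / 4) *
      Real.exp (-(∑ i, (x i) ^ 2) / (2 * sf)))
    (hbig : (n₁ : ℝ) > (1 / ε) * α ^ ((n : ℝ) / 2)) :
    ∃ w : Fin n₁ → Fin n → ℝ,
      ∫ x, ((∑ i, (α ^ ((n : ℝ) / 4) / n₁) *
          Real.cos ((∑ j, w i j * x j) / Real.sqrt sf)) - μc x) ^ 2
        ∂(gaussMeasure n sx) ≤ ε :=
  stmt16_general n n₁ sf sx α ε hsf hsx hε hα μc hμc hbig
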